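/- Fix m ≥ 1. Let r ≥ 3, R ≥ 0 be integers and ([a_l,b_l])_{l∈ℕ} a family of disjoint intervals. Then uniform (r,R)-good subsets exist. Moreover, for any uniform (r,R)-good subsets (Q^l_{ij})_{1≤j<i≤r, l∈ℕ} with constants L_1, L_2 > 0: (1) for any integer R′ > R there exist uniform (r,R′)-good subsets (Q̃^l_{ij}) with constants L̃_1, L̃_2 such that Q̃^l_{ij} ⊆ Q^l_{ij} for all i, j, l, with L̃_1 = 2^M L_1 and L̃_2 = L_2/2^M for some M = M(r,R′); (2) there exist uniform (r,R)-good subsets (P^l_{ij}) and (P̃^l_{ij}), both with constants L_1 and L_2/2, such that Q^l_{ij} = P^l_{ij} ∪ P̃^l_{ij} and |P^l_{ij} ∩ P̃^l_{ij}| = 0 for all i, j, l; (3) for any 1 ≤ k ≤ r, the family (Q̃^l_{ij})_{1≤j<i≤r−1, l∈ℕ} defined by Q̃^l_{ij} := Q^l_{σ(i)σ(j)}, where σ(n) = n for n < k and σ(n) = n+1 for n ≥ k, forms uniform (r−1,R)-good subsets with the same constants L_1, L_2. -/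

import Mathlib

open MeasureTheory Set

noncomputable section

/-- The union `Q^l_{ij} = ⋃_{k<L₁} I^l_{ij}(k)` of the closed subintervals
determined by the endpoint data `I`. -/
def GoodQ {r : ℕ} (I : ℕ → Fin r → Fin r → ℕ → ℝ × ℝ) (L1 : ℕ)
    (l : ℕ) (i j : Fin r) : Set ℝ :=
  ⋃ k ∈ Finset.range L1, Icc (I l i j k).1 (I l i j k).2

/-- Uniform `(r,R)`-good subsets (with smoothness parameter `m`) for a family of
intervals `[aS l, bS l]`, given by the interval endpoint data `I` and constants
`L1, L2`. -/
def IsGoodSubsets (m r R : ℕ) (aS bS : ℕ → ℝ)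
    (I : ℕ → Fin r → Fin r → ℕ → ℝ × ℝ) (L1 : ℕ) (L2 : ℝ) : Prop :=
  0 < L1 ∧ 0 < L2 ∧ 2 * (r + R) < L1 ∧
  ∀ l : ℕ, ∀ i j : Fin r, j < i →
    (∀ k < L1, aS l ≤ (I l i j k).1 ∧ (I l i j k).1 ≤ (I l i j k).2 ∧
      (I l i j k).2 ≤ bS l ∧ (I l i j k).2 - (I l i j k).1 = L2 * (bS l - aS l)) ∧
    (∀ k < L1, ∀ k' < L1, k ≠ k' →
      volume (Icc (I l i j k).1 (I l i j k).2 ∩ Icc (I l i j k').1 (I l i j k').2) = 0) ∧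
    (∀ i' j' : Fin r, j' < i' → (i, j) ≠ (i', j') →
      volume (GoodQ I L1 l i j ∩ GoodQ I L1 l i' j') = 0) ∧
    (∀ c d : ℝ, aS l ≤ c → d ≤ bS l → (bS l - aS l) / (4 * (m : ℝ) ^ 2) ≤ d - c →
      ∃ k < L1, Icc (I l i j k).1 (I l i j k).2 ⊆ Icc c d)

/-- The order embedding `Fin (r-1) → Fin r` skipping the index `k`. -/
def skipEmb (r : ℕ) (k : Fin r) (i : Fin (r - 1)) : Fin r :=
  if (i : ℕ) < (k : ℕ) then ⟨i, by omega⟩ else ⟨i + 1, by omega⟩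

lemma null_Icc_inter {a b c d : ℝ} (h : b ≤ c) : volume (Icc a b ∩ Icc c d) = 0 := by
  rw [Icc_inter_Icc, Real.volume_Icc]
  have h1 : min b d ≤ max a c := le_trans (min_le_left _ _) (le_trans h (le_max_right a c))
  exact ENNReal.ofReal_eq_zero.2 (by linarith)

lemma biUnion_inter_null {A B : ℕ → Set ℝ} {n n' : ℕ}
    (h : ∀ k < n, ∀ k' < n', volume (A k ∩ B k') = 0) :
    volume ((⋃ k ∈ Finset.range n, A k) ∩ (⋃ k ∈ Finset.range n', B k)) = 0 := by
  have hsub : (⋃ k ∈ Finset.range n, A k) ∩ (⋃ k ∈ Finset.range n', B k) ⊆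
      ⋃ k ∈ Finset.range n, ⋃ k' ∈ Finset.range n', (A k ∩ B k') := by
    rintro x ⟨hx1, hx2⟩
    simp only [Set.mem_iUnion, Finset.mem_range] at *
    obtain ⟨k, hk, hxk⟩ := hx1; obtain ⟨k', hk', hxk'⟩ := hx2
    exact ⟨k, hk, k', hk', hxk, hxk'⟩
  refine measure_mono_null hsub ?_
  refine (measure_biUnion_null_iff (Set.to_countable _)).2 fun k hk => ?_
  refine (measure_biUnion_null_iff (Set.to_countable _)).2 fun k' hk' => ?_
  exact h k (Finset.mem_range.1 hk) k' (Finset.mem_range.1 hk')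

set_option maxHeartbeats 1000000 in
lemma exists_good (m r R : ℕ) (hm : 1 ≤ m) (hr : 3 ≤ r) (aS bS : ℕ → ℝ)
    (hab : ∀ l, aS l < bS l) :
    ∃ (I : ℕ → Fin r → Fin r → ℕ → ℝ × ℝ) (L1 : ℕ) (L2 : ℝ),
      IsGoodSubsets m r R aS bS I L1 L2 := by
  set P := r * r with hPdef
  set L1 := 16 * m ^ 2 + 2 * (r + R) + 1 with hL1def
  set T := L1 * P with hTdef
  have hPpos : 0 < P := by
    have hr0 : 0 < r := by omega
    exact Nat.mul_pos hr0 hr0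
  have hL1pos : 0 < L1 := by omega
  have hTpos : 0 < T := Nat.mul_pos hL1pos hPpos
  have hTR : (0:ℝ) < (T:ℝ) := by exact_mod_cast hTpos
  have hplt : ∀ i j : Fin r, (i:ℕ) * r + (j:ℕ) < P := by
    intro i j
    have h1 : (i:ℕ) + 1 ≤ r := i.isLt
    calc (i:ℕ) * r + (j:ℕ) < (i:ℕ) * r + r := by omega
    _ = ((i:ℕ) + 1) * r := by ring
    _ ≤ r * r := Nat.mul_le_mul_right r h1
  refine ⟨fun l i j k =>
      (aS l + ((k * P + ((i:ℕ) * r + (j:ℕ)) : ℕ) : ℝ) * ((bS l - aS l) / (T:ℝ)),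
       aS l + ((k * P + ((i:ℕ) * r + (j:ℕ)) + 1 : ℕ) : ℝ) * ((bS l - aS l) / (T:ℝ))),
    L1, 1 / (T:ℝ), hL1pos, by positivity, by omega, fun l i j hji => ?_⟩
  have hbal : 0 < bS l - aS l := by linarith [hab l]
  set ℓ := (bS l - aS l) / (T:ℝ) with hldef
  have hl : 0 < ℓ := div_pos hbal hTR
  clear_value T L1 P
  have hTl : (T:ℝ) * ℓ = bS l - aS l := by rw [hldef, mul_comm, div_mul_cancel₀ _ (ne_of_gt hTR)]
  -- generic null fact
  have hnull : ∀ t t' : ℕ, t ≠ t' →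
      volume (Icc (aS l + (t:ℝ)*ℓ) (aS l + ((t+1:ℕ):ℝ)*ℓ) ∩
        Icc (aS l + (t':ℝ)*ℓ) (aS l + ((t'+1:ℕ):ℝ)*ℓ)) = 0 := by
    intro t t' htt
    rcases Nat.lt_or_ge t t' with h | h
    · apply null_Icc_inter
      have h1 : ((t:ℝ)+1) ≤ (t':ℝ) := by exact_mod_cast h
      push_cast
      nlinarith [hl.le]
    · rw [Set.inter_comm]; apply null_Icc_inter
      have h1 : ((t':ℝ)+1) ≤ (t:ℝ) := by exact_mod_cast (by omega : t' + 1 ≤ t)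
      push_cast
      nlinarith [hl.le]
  refine ⟨?_, ?_, ?_, ?_⟩
  · -- clause a
    intro k hk
    dsimp only
    have ht1 : k * P + ((i:ℕ) * r + (j:ℕ)) + 1 ≤ T := by
      have h1 : (k+1) * P ≤ L1 * P := Nat.mul_le_mul_right P (by omega)
      have h2 : k * P + P = (k+1) * P := by ring
      have := hplt i j
      omega
    have ht1R : ((k * P + ((i:ℕ) * r + (j:ℕ)) + 1 : ℕ) : ℝ) ≤ (T:ℝ) := by exact_mod_cast ht1
    refine ⟨le_add_of_nonneg_right (by positivity), ?_, ?_, ?_⟩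
    · have : ((k * P + ((i:ℕ) * r + (j:ℕ)) : ℕ) : ℝ) ≤ ((k * P + ((i:ℕ) * r + (j:ℕ)) + 1 : ℕ) : ℝ) := by
        exact_mod_cast Nat.le_succ _
      nlinarith [hl.le]
    · have := mul_le_mul_of_nonneg_right ht1R hl.le
      linarith [hTl]
    · push_cast
      ring
  · -- clause b
    intro k hk k' hk' hkk
    dsimp only
    have : k * P + ((i:ℕ) * r + (j:ℕ)) ≠ k' * P + ((i:ℕ) * r + (j:ℕ)) := by
      intro hE
      apply hkk
      exact Nat.eq_of_mul_eq_mul_right hPpos (by omega)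
    exact hnull _ _ this
  · -- clause c
    intro i' j' hji' hne
    have hpne : (i:ℕ)*r + (j:ℕ) ≠ (i':ℕ)*r + (j':ℕ) := by
      intro hE
      have hj := j.isLt; have hj' := j'.isLt
      have h1 : ((i:ℕ)*r + (j:ℕ)) % r = ((i':ℕ)*r + (j':ℕ)) % r := by rw [hE]
      rw [Nat.add_comm ((i:ℕ)*r), Nat.add_mul_mod_self_right, Nat.mod_eq_of_lt hj,
        Nat.add_comm ((i':ℕ)*r), Nat.add_mul_mod_self_right, Nat.mod_eq_of_lt hj'] at h1
      rw [h1] at hE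
      have h2 : (i:ℕ) = (i':ℕ) :=
        Nat.eq_of_mul_eq_mul_right (by omega) (Nat.add_right_cancel hE)
      obtain rfl : i = i' := Fin.ext h2
      obtain rfl : j = j' := Fin.ext h1
      exact hne rfl
    unfold GoodQ
    apply biUnion_inter_null
    intro k hk k' hk'
    dsimp only
    refine hnull _ _ ?_
    intro hE
    apply hpne
    have hmodP : ∀ k p : ℕ, p < P → (k * P + p) % P = p := fun k p hp => by
      rw [Nat.add_comm, Nat.add_mul_mod_self_right, Nat.mod_eq_of_lt hp]
    have h1 := congrArg (· % P) hE
    rw [hmodP k _ (hplt i j), hmodP k' _ (hplt i' j')] at h1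
    exact h1
  · -- clause d
    intro c d hc hd hcd
    obtain ⟨p, hpeq, hp⟩ : ∃ p, p = (i:ℕ)*r+(j:ℕ) ∧ p < P := ⟨_, rfl, hplt i j⟩
    set t0 := ⌈(c - aS l)/ℓ⌉₊ with ht0def
    have hca : (0:ℝ) ≤ c - aS l := by linarith
    have ht0ge : (c - aS l)/ℓ ≤ (t0:ℝ) := Nat.le_ceil _
    have ht0lt : (t0:ℝ) < (c - aS l)/ℓ + 1 := Nat.ceil_lt_add_one (by positivity)
    set kk := t0 / P + 1 with hkkdef
    clear_value t0 kk
    obtain ⟨A, u, hA1, hA2, hA3⟩ : ∃ A u, t0 = A + u ∧ u < P ∧ kk * P + p = A + P + p :=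
      ⟨P * (t0 / P), t0 % P, (Nat.div_add_mod t0 P).symm, Nat.mod_lt _ hPpos, by
        rw [hkkdef]; ring⟩
    have htge : t0 ≤ kk * P + p := by omega
    have htle : kk * P + p + 1 ≤ t0 + 2 * P := by omega
    have hm1 : (1:ℝ) ≤ (m:ℝ) := by exact_mod_cast hm
    have hP1 : (1:ℝ) ≤ (P:ℝ) := by exact_mod_cast hPpos
    -- lower bound
    have hclow : c ≤ aS l + ((kk * P + p : ℕ):ℝ) * ℓ := by
      have h1 : (t0:ℝ) ≤ ((kk * P + p : ℕ):ℝ) := Nat.cast_le.2 htge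
      have h2 : c - aS l ≤ (t0:ℝ) * ℓ := by
        calc c - aS l = ((c - aS l)/ℓ) * ℓ := by field_simp
        _ ≤ (t0:ℝ)*ℓ := mul_le_mul_of_nonneg_right ht0ge hl.le
      linarith [mul_le_mul_of_nonneg_right h1 hl.le]
    -- upper bound
    have hdhigh : aS l + ((kk * P + p + 1 : ℕ):ℝ) * ℓ ≤ d := by
      have h1 : ((kk * P + p + 1 : ℕ):ℝ) ≤ (t0:ℝ) + 2*(P:ℝ) := by
        have hcst : ((kk * P + p + 1 : ℕ):ℝ) ≤ ((t0 + 2 * P : ℕ):ℝ) := Nat.cast_le.2 htle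
        have hcst2 : ((t0 + 2 * P : ℕ):ℝ) = (t0:ℝ) + 2*(P:ℝ) := by push_cast; ring
        linarith
      have ht0l : (t0:ℝ)*ℓ ≤ (c - aS l) + ℓ := by
        have hh := mul_le_mul_of_nonneg_right ht0lt.le hl.le
        rw [add_mul, div_mul_cancel₀ _ (ne_of_gt hl)] at hh
        linarith
      have h2 : ((t0:ℝ) + 2*(P:ℝ)) * ℓ ≤ (c - aS l) + (1 + 2*(P:ℝ)) * ℓ := by
        linarith [ht0l]
      have h3 : (1 + 2*(P:ℝ)) * ℓ ≤ 4*(P:ℝ)*ℓ := by nlinarith [hl.le, hP1]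
      have hT16 : (16 * (m:ℝ)^2 * (P:ℝ)) ≤ (T:ℝ) := by
        have h16 : 16 * m^2 * P ≤ T := by
          rw [hTdef]
          exact Nat.mul_le_mul_right P (by omega)
        calc (16 * (m:ℝ)^2 * (P:ℝ)) = ((16 * m^2 * P : ℕ) : ℝ) := by push_cast; ring
        _ ≤ (T:ℝ) := Nat.cast_le.2 h16
      have h4 : 4*(P:ℝ)*ℓ ≤ d - c := by
        have hdc : (T:ℝ)*ℓ / (4*(m:ℝ)^2) ≤ d - c := by
          rw [hTl]; exact hcd
        have h5 : 4*(P:ℝ)*ℓ * (4*(m:ℝ)^2) ≤ (T:ℝ)*ℓ := by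
          linarith [mul_le_mul_of_nonneg_right hT16 hl.le]
        have h6 : (0:ℝ) < 4*(m:ℝ)^2 := by positivity
        rw [div_le_iff₀ h6] at hdc
        exact le_of_mul_le_mul_right (le_trans h5 hdc) h6
      have h7 : ((kk * P + p + 1 : ℕ):ℝ)*ℓ ≤ ((t0:ℝ)+2*(P:ℝ))*ℓ := mul_le_mul_of_nonneg_right h1 hl.le
      linarith
    have hkL1 : kk < L1 := by
      have hb : bS l = aS l + (T:ℝ)*ℓ := by linarith [hTl]
      have h8 : ((kk * P + p + 1 : ℕ):ℝ) * ℓ ≤ (T:ℝ)*ℓ := by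
        rw [hb] at hd
        linarith
      have h9 : ((kk * P + p + 1 : ℕ):ℝ) ≤ (T:ℝ) := le_of_mul_le_mul_right h8 hl
      have hTnat : kk * P + p + 1 ≤ T := Nat.cast_le.1 h9
      have h10 : kk * P < L1 * P := by
        calc kk * P ≤ kk * P + p := Nat.le_add_right _ _
        _ < kk * P + p + 1 := Nat.lt_succ_self _
        _ ≤ L1 * P := by rw [← hTdef]; exact hTnat
      exact Nat.lt_of_mul_lt_mul_right h10
    subst hpeq
    exact ⟨kk, hkL1, Icc_subset_Icc hclow hdhigh⟩

lemma skipEmb_lt {r : ℕ} (k : Fin r) {i j : Fin (r-1)} (h : j < i) :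
    skipEmb r k j < skipEmb r k i := by
  have hj : (j:ℕ) < (i:ℕ) := h
  simp only [skipEmb]
  split_ifs <;> rw [Fin.mk_lt_mk] <;> omega

lemma skipEmb_inj {r : ℕ} (k : Fin r) : Function.Injective (skipEmb r k) := by
  intro a b hab
  have h := congrArg Fin.val hab
  simp only [skipEmb, apply_ite Fin.val] at h
  split_ifs at h <;> (apply Fin.ext; omega)

lemma part3 (m r R : ℕ) (aS bS : ℕ → ℝ) (I : ℕ → Fin r → Fin r → ℕ → ℝ × ℝ)
    (L1 : ℕ) (L2 : ℝ) (hGood : IsGoodSubsets m r R aS bS I L1 L2) (k : Fin r) :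
    IsGoodSubsets m (r-1) R aS bS
      (fun l i j => I l (skipEmb r k i) (skipEmb r k j)) L1 L2 := by
  obtain ⟨hL1, hL2, hRL, hmain⟩ := hGood
  refine ⟨hL1, hL2, by omega, fun l i j hji => ?_⟩
  obtain ⟨ha, hb, hc, hd⟩ := hmain l (skipEmb r k i) (skipEmb r k j) (skipEmb_lt k hji)
  refine ⟨ha, hb, ?_, hd⟩
  intro i' j' hji' hne
  have h := hc (skipEmb r k i') (skipEmb r k j') (skipEmb_lt k hji') ?_
  · exact h
  · intro hE
    apply hne
    rw [Prod.mk.injEq] at hE ⊢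
    exact ⟨skipEmb_inj k hE.1, skipEmb_inj k hE.2⟩

lemma part2 (m r R : ℕ) (aS bS : ℕ → ℝ) (I : ℕ → Fin r → Fin r → ℕ → ℝ × ℝ)
    (L1 : ℕ) (L2 : ℝ) (hGood : IsGoodSubsets m r R aS bS I L1 L2) :
    ∃ P Pt : ℕ → Fin r → Fin r → ℕ → ℝ × ℝ,
      IsGoodSubsets m r R aS bS P L1 (L2 / 2) ∧
      IsGoodSubsets m r R aS bS Pt L1 (L2 / 2) ∧
      ∀ (l : ℕ) (i j : Fin r), j < i →
        GoodQ I L1 l i j = GoodQ P L1 l i j ∪ GoodQ Pt L1 l i j ∧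
        volume (GoodQ P L1 l i j ∩ GoodQ Pt L1 l i j) = 0 := by
  obtain ⟨hL1, hL2, hRL, hmain⟩ := hGood
  set P : ℕ → Fin r → Fin r → ℕ → ℝ × ℝ :=
    fun l i j k => ((I l i j k).1, ((I l i j k).1 + (I l i j k).2)/2) with hPdef
  set Pt : ℕ → Fin r → Fin r → ℕ → ℝ × ℝ :=
    fun l i j k => (((I l i j k).1 + (I l i j k).2)/2, (I l i j k).2) with hPtdef
  have hsubP : ∀ l i j k, j < i → k < L1 →
      Icc (P l i j k).1 (P l i j k).2 ⊆ Icc (I l i j k).1 (I l i j k).2 := by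
    intro l i j k hji hk
    obtain ⟨h1, h2, h3, h4⟩ := (hmain l i j hji).1 k hk
    exact Icc_subset_Icc le_rfl (by dsimp only [P]; linarith)
  have hsubPt : ∀ l i j k, j < i → k < L1 →
      Icc (Pt l i j k).1 (Pt l i j k).2 ⊆ Icc (I l i j k).1 (I l i j k).2 := by
    intro l i j k hji hk
    obtain ⟨h1, h2, h3, h4⟩ := (hmain l i j hji).1 k hk
    exact Icc_subset_Icc (by dsimp only [Pt]; linarith) le_rfl
  have hQP : ∀ l i j, j < i → GoodQ P L1 l i j ⊆ GoodQ I L1 l i j := by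
    intro l i j hji
    exact Set.iUnion₂_mono fun k hk => hsubP l i j k hji (Finset.mem_range.1 hk)
  have hQPt : ∀ l i j, j < i → GoodQ Pt L1 l i j ⊆ GoodQ I L1 l i j := by
    intro l i j hji
    exact Set.iUnion₂_mono fun k hk => hsubPt l i j k hji (Finset.mem_range.1 hk)
  have hGP : IsGoodSubsets m r R aS bS P L1 (L2 / 2) := by
    refine ⟨hL1, by linarith, hRL, fun l i j hji => ?_⟩
    obtain ⟨ha, hb, hc, hd⟩ := hmain l i j hji
    refine ⟨?_, ?_, ?_, ?_⟩
    · intro kk hk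
      obtain ⟨h1, h2, h3, h4⟩ := ha kk hk
      refine ⟨h1, by dsimp only [P]; linarith, by dsimp only [P]; linarith, by dsimp only [P]; linarith⟩
    · intro kk hk kk' hk' hne
      exact measure_mono_null
        (Set.inter_subset_inter (hsubP l i j kk hji hk) (hsubP l i j kk' hji hk'))
        (hb kk hk kk' hk' hne)
    · intro i' j' hji' hne
      exact measure_mono_null
        (Set.inter_subset_inter (hQP l i j hji) (hQP l i' j' hji'))
        (hc i' j' hji' hne)
    · intro c d hcl hdl hcd
      obtain ⟨kk, hk, hsub⟩ := hd c d hcl hdl hcd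
      exact ⟨kk, hk, (hsubP l i j kk hji hk).trans hsub⟩
  have hGPt : IsGoodSubsets m r R aS bS Pt L1 (L2 / 2) := by
    refine ⟨hL1, by linarith, hRL, fun l i j hji => ?_⟩
    obtain ⟨ha, hb, hc, hd⟩ := hmain l i j hji
    refine ⟨?_, ?_, ?_, ?_⟩
    · intro kk hk
      obtain ⟨h1, h2, h3, h4⟩ := ha kk hk
      refine ⟨by dsimp only [Pt]; linarith, by dsimp only [Pt]; linarith, h3, by dsimp only [Pt]; linarith⟩
    · intro kk hk kk' hk' hne
      exact measure_mono_null
        (Set.inter_subset_inter (hsubPt l i j kk hji hk) (hsubPt l i j kk' hji hk'))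
        (hb kk hk kk' hk' hne)
    · intro i' j' hji' hne
      exact measure_mono_null
        (Set.inter_subset_inter (hQPt l i j hji) (hQPt l i' j' hji'))
        (hc i' j' hji' hne)
    · intro c d hcl hdl hcd
      obtain ⟨kk, hk, hsub⟩ := hd c d hcl hdl hcd
      exact ⟨kk, hk, (hsubPt l i j kk hji hk).trans hsub⟩
  refine ⟨P, Pt, hGP, hGPt, fun l i j hji => ⟨?_, ?_⟩⟩
  · obtain ⟨ha, hb, hc, hd⟩ := hmain l i j hji
    unfold GoodQ
    ext x
    simp only [Set.mem_iUnion, Set.mem_union, Finset.mem_range]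
    constructor
    · rintro ⟨kk, hk, hx⟩
      obtain ⟨h1, h2, h3, h4⟩ := ha kk hk
      rw [← Icc_union_Icc_eq_Icc (a := (I l i j kk).1)
        (b := ((I l i j kk).1 + (I l i j kk).2)/2) (c := (I l i j kk).2)
        (by linarith) (by linarith)] at hx
      rcases hx with hx | hx
      · exact Or.inl ⟨kk, hk, hx⟩
      · exact Or.inr ⟨kk, hk, hx⟩
    · rintro (⟨kk, hk, hx⟩ | ⟨kk, hk, hx⟩)
      · exact ⟨kk, hk, hsubP l i j kk hji hk hx⟩
      · exact ⟨kk, hk, hsubPt l i j kk hji hk hx⟩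
  · obtain ⟨ha, hb, hc, hd⟩ := hmain l i j hji
    unfold GoodQ
    apply biUnion_inter_null
    intro kk hk kk' hk'
    rcases eq_or_ne kk kk' with rfl | hne
    · exact null_Icc_inter (by dsimp only [P, Pt]; exact le_rfl)
    · exact measure_mono_null
        (Set.inter_subset_inter (hsubP l i j kk hji hk) (hsubPt l i j kk' hji hk'))
        (hb kk hk kk' hk' hne)

set_option maxHeartbeats 1000000 in
lemma part1 (m r R : ℕ) (aS bS : ℕ → ℝ) (hab : ∀ l, aS l < bS l)
    (I : ℕ → Fin r → Fin r → ℕ → ℝ × ℝ) (L1 : ℕ) (L2 : ℝ)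
    (hGood : IsGoodSubsets m r R aS bS I L1 L2) (R' : ℕ) (hR' : R < R') :
    ∃ (I' : ℕ → Fin r → Fin r → ℕ → ℝ × ℝ) (M : ℕ),
      IsGoodSubsets m r R' aS bS I' (2 ^ M * L1) (L2 / 2 ^ M) ∧
      ∀ (l : ℕ) (i j : Fin r), j < i →
        GoodQ I' (2 ^ M * L1) l i j ⊆ GoodQ I L1 l i j := by
  obtain ⟨hL1, hL2, hRL, hmain⟩ := hGood
  set M := 2 * (r + R') with hMdef
  set N := 2 ^ M with hNdef
  have hN : 0 < N := Nat.pow_pos (by omega)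
  have hNR : (0:ℝ) < (N:ℝ) := by exact_mod_cast hN
  set I' : ℕ → Fin r → Fin r → ℕ → ℝ × ℝ := fun l i j k =>
    ((I l i j (k / N)).1 + ((k % N : ℕ) : ℝ) * (L2 * (bS l - aS l) / (N:ℝ)),
     (I l i j (k / N)).1 + ((k % N + 1 : ℕ) : ℝ) * (L2 * (bS l - aS l) / (N:ℝ))) with hI'def
  have hdiv : ∀ k, k < N * L1 → k / N < L1 := by
    intro k hk
    exact Nat.div_lt_of_lt_mul (by omega)
  -- subinterval inclusion
  have hsubI : ∀ l i j k, j < i → k < N * L1 →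
      Icc (I' l i j k).1 (I' l i j k).2 ⊆
        Icc (I l i j (k / N)).1 (I l i j (k / N)).2 := by
    intro l i j k hji hk
    have hbal : (0:ℝ) < bS l - aS l := by linarith [hab l]
    have hl' : (0:ℝ) ≤ L2 * (bS l - aS l) / (N:ℝ) := by positivity
    obtain ⟨h1, h2, h3, h4⟩ := (hmain l i j hji).1 (k / N) (hdiv k hk)
    have hs : k % N + 1 ≤ N := Nat.mod_lt k hN
    have hsR : ((k % N + 1 : ℕ) : ℝ) ≤ (N:ℝ) := Nat.cast_le.2 hs
    have hNl : (N:ℝ) * (L2 * (bS l - aS l) / (N:ℝ)) = L2 * (bS l - aS l) := by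
      field_simp
    refine Icc_subset_Icc (le_add_of_nonneg_right (by positivity)) ?_
    dsimp only [I']
    have := mul_le_mul_of_nonneg_right hsR hl'
    linarith
  have hQsub : ∀ (l : ℕ) (i j : Fin r), j < i →
      GoodQ I' (N * L1) l i j ⊆ GoodQ I L1 l i j := by
    intro l i j hji x hx
    simp only [GoodQ, Set.mem_iUnion, Finset.mem_range] at hx ⊢
    obtain ⟨k, hk, hxk⟩ := hx
    exact ⟨k / N, hdiv k hk, hsubI l i j k hji hk hxk⟩
  have h2M : 2 ^ M * L1 = N * L1 := rfl
  refine ⟨I', M, ⟨?_, by positivity, ?_, fun l i j hji => ?_⟩, hQsub⟩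
  · exact Nat.mul_pos hN hL1
  · calc 2 * (r + R') = M := rfl
    _ < 2 ^ M := Nat.lt_two_pow_self
    _ ≤ 2 ^ M * L1 := Nat.le_mul_of_pos_right _ hL1
  obtain ⟨ha, hb, hc, hd⟩ := hmain l i j hji
  have hbal : (0:ℝ) < bS l - aS l := by linarith [hab l]
  have hl'pos : (0:ℝ) < L2 * (bS l - aS l) / (N:ℝ) := by positivity
  refine ⟨?_, ?_, ?_, ?_⟩
  · -- clause a
    intro k hk
    obtain ⟨h1, h2, h3, h4⟩ := ha (k / N) (hdiv k hk)
    have hcast : ((k % N : ℕ) : ℝ) ≤ ((k % N + 1 : ℕ) : ℝ) := Nat.cast_le.2 (Nat.le_succ _)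
    have hs : k % N + 1 ≤ N := Nat.mod_lt k hN
    have hsR : ((k % N + 1 : ℕ) : ℝ) ≤ (N:ℝ) := Nat.cast_le.2 hs
    have hNl : (N:ℝ) * (L2 * (bS l - aS l) / (N:ℝ)) = L2 * (bS l - aS l) := by
      field_simp
    have hsnd : (I' l i j k).2 ≤ (I l i j (k / N)).2 := by
      dsimp only [I']
      linarith [mul_le_mul_of_nonneg_right hsR hl'pos.le]
    have hN2M : ((N:ℕ):ℝ) = (2:ℝ) ^ M := by rw [hNdef]; push_cast; ring
    refine ⟨le_trans h1 (le_add_of_nonneg_right (by positivity)), ?_,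
        le_trans hsnd h3, ?_⟩
    · dsimp only [I']
      linarith [mul_le_mul_of_nonneg_right hcast hl'pos.le]
    · dsimp only [I']
      rw [show ((k % N + 1 : ℕ) : ℝ) = ((k % N : ℕ) : ℝ) + 1 by push_cast; ring]
      rw [div_eq_mul_inv, div_eq_mul_inv, hN2M]
      ring
  · -- clause b
    intro k hk k' hk' hne
    rcases eq_or_ne (k / N) (k' / N) with hq | hq
    · have hs : k % N ≠ k' % N := by
        intro hseq
        apply hne
        have e1 := Nat.div_add_mod k N
        have e2 := Nat.div_add_mod k' N
        rw [← e1, ← e2, hq, hseq]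
      rcases Nat.lt_or_ge (k % N) (k' % N) with h | h
      · apply null_Icc_inter
        dsimp only [I']
        rw [hq]
        have hcst : ((k % N + 1 : ℕ) : ℝ) ≤ ((k' % N : ℕ) : ℝ) := Nat.cast_le.2 h
        linarith [mul_le_mul_of_nonneg_right hcst hl'pos.le]
      · rw [Set.inter_comm]
        apply null_Icc_inter
        dsimp only [I']
        rw [hq]
        have hcst : ((k' % N + 1 : ℕ) : ℝ) ≤ ((k % N : ℕ) : ℝ) := Nat.cast_le.2 (by omega)
        linarith [mul_le_mul_of_nonneg_right hcst hl'pos.le]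
    · exact measure_mono_null
        (Set.inter_subset_inter (hsubI l i j k hji hk) (hsubI l i j k' hji hk'))
        (hb (k / N) (hdiv k hk) (k' / N) (hdiv k' hk') hq)
  · -- clause c
    intro i' j' hji' hne
    exact measure_mono_null
      (Set.inter_subset_inter (hQsub l i j hji) (hQsub l i' j' hji'))
      (hc i' j' hji' hne)
  · -- clause d
    intro c d hcl hdl hcd
    obtain ⟨q, hq, hsub⟩ := hd c d hcl hdl hcd
    refine ⟨q * N, ?_, ?_⟩
    · calc q * N < L1 * N := (Nat.mul_lt_mul_right hN).2 hq
      _ = N * L1 := Nat.mul_comm _ _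
    · refine subset_trans ?_ (subset_trans (hsubI l i j (q * N) hji
        (by calc q * N < L1 * N := (Nat.mul_lt_mul_right hN).2 hq
            _ = N * L1 := Nat.mul_comm _ _)) ?_)
      · exact subset_rfl
      · rw [Nat.mul_div_cancel q hN]
        exact hsub

/-- Existence and basic properties of uniform `(r,R)`-good subsets:
(1) refinement into `(r,R')`-good subsets for `R' > R`;
(2) splitting into two `(r,R)`-good subsets with halved interval length;
(3) deleting an index gives `(r-1,R)`-good subsets. -/
theorem stmt15 (m r R : ℕ) (hm : 1 ≤ m) (hr : 3 ≤ r) (aS bS : ℕ → ℝ)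
    (hab : ∀ l, aS l < bS l)
    (hdisj : ∀ l l', l ≠ l' → Disjoint (Icc (aS l) (bS l)) (Icc (aS l') (bS l'))) :
    (∃ (I : ℕ → Fin r → Fin r → ℕ → ℝ × ℝ) (L1 : ℕ) (L2 : ℝ),
        IsGoodSubsets m r R aS bS I L1 L2) ∧
    ∀ (I : ℕ → Fin r → Fin r → ℕ → ℝ × ℝ) (L1 : ℕ) (L2 : ℝ),
      IsGoodSubsets m r R aS bS I L1 L2 →
      ((∀ R' : ℕ, R < R' →
          ∃ (I' : ℕ → Fin r → Fin r → ℕ → ℝ × ℝ) (M : ℕ),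
            IsGoodSubsets m r R' aS bS I' (2 ^ M * L1) (L2 / 2 ^ M) ∧
            ∀ (l : ℕ) (i j : Fin r), j < i →
              GoodQ I' (2 ^ M * L1) l i j ⊆ GoodQ I L1 l i j) ∧
        (∃ P Pt : ℕ → Fin r → Fin r → ℕ → ℝ × ℝ,
            IsGoodSubsets m r R aS bS P L1 (L2 / 2) ∧
            IsGoodSubsets m r R aS bS Pt L1 (L2 / 2) ∧
            ∀ (l : ℕ) (i j : Fin r), j < i →
              GoodQ I L1 l i j = GoodQ P L1 l i j ∪ GoodQ Pt L1 l i j ∧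
              volume (GoodQ P L1 l i j ∩ GoodQ Pt L1 l i j) = 0) ∧
        (∀ k : Fin r,
          IsGoodSubsets m (r - 1) R aS bS
            (fun l i j => I l (skipEmb r k i) (skipEmb r k j)) L1 L2)) := by
  refine ⟨exists_good m r R hm hr aS bS hab, fun I L1 L2 hGood => ?_⟩
  exact ⟨fun R' hR' => part1 m r R aS bS hab I L1 L2 hGood R' hR',
         part2 m r R aS bS I L1 L2 hGood,
         fun k => part3 m r R aS bS I L1 L2 hGood k⟩

end
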